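/- Let U be a Hopf algebra over a field k with comultiplication Δ, counit ε, antipode S, and let K ∈ U be an invertible element with Δ(K) = K ⊗ K and S²(x) = K x K⁻¹ for all x ∈ U. Let B, B' ⊆ U be right coideal subalgebras, V a finite-dimensional B-module, W a finite-dimensional B'-module, Φ : U → Hom_k(W, V) a matrix-spherical function in E^{V,W} and Ψ : U → Hom_k(V, W) a matrix-spherical function in E^{W,V}. Define Ξ_{V,W}(Φ, Ψ)(x) = Σ tr_V( Φ(x₍₁₎) ∘ Ψ(S(x₍₂₎) · K) ) and Ξ_{W,V}(Ψ, Φ)(y) = Σ tr_W( Ψ(y₍₁₎) ∘ Φ(S(y₍₂₎) · K) ). Then for all x ∈ U: Ξ_{V,W}(Φ, Ψ)(x) = Ξ_{W,V}(Ψ, Φ)(S(x) · K). -/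

import Mathlib

open TensorProduct Coalgebra LinearMap

namespace XiAux

variable {R : Type*} [CommSemiring R]

section Coalg

variable {C : Type*} [AddCommMonoid C] [Module R C] [Coalgebra R C]
variable {M M' : Type*} [AddCommMonoid M] [Module R M] [AddCommMonoid M'] [Module R M']
variable {ι κ Λ : Type*}

set_option linter.unusedSectionVars false

lemma sum_counit_smul {a : C} (r : Repr R a ι) :
    ∑ i ∈ r.index, counit (R := R) (r.left i) • r.right i = a := by
  have h := congrArg (TensorProduct.lid R C) (Coalgebra.sum_counit_tmul_eq r)
  simpa [map_sum, -Coalgebra.sum_counit_tmul_eq] using h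

lemma sum_smul_counit {a : C} (r : Repr R a ι) :
    ∑ i ∈ r.index, counit (R := R) (r.right i) • r.left i = a := by
  have h := congrArg (TensorProduct.rid R C) (Coalgebra.sum_tmul_counit_eq r)
  simpa [map_sum, -Coalgebra.sum_tmul_counit_eq] using h

lemma triple_coassoc (φ : C →ₗ[R] C →ₗ[R] C →ₗ[R] M) {a : C} (r : Repr R a ι)
    (rl : ∀ i, Repr R (r.left i) κ) (rr : ∀ i, Repr R (r.right i) Λ) :
    ∑ i ∈ r.index, ∑ p ∈ (rl i).index,
      φ ((rl i).left p) ((rl i).right p) (r.right i) =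
    ∑ i ∈ r.index, ∑ q ∈ (rr i).index,
      φ (r.left i) ((rr i).left q) ((rr i).right q) := by
  have h := congrArg
    (TensorProduct.lift ((TensorProduct.lift.equiv (RingHom.id R) C C M).toLinearMap ∘ₗ φ))
    (Coalgebra.sum_tmul_tmul_eq r rl rr)
  simpa [map_sum, TensorProduct.lift.equiv_apply, -Coalgebra.sum_tmul_tmul_eq] using h


/-- Trilinear map `a b c ↦ G a (H b c)`. -/
noncomputable def tri (G : C →ₗ[R] M' →ₗ[R] M) (H : C →ₗ[R] C →ₗ[R] M') :
    C →ₗ[R] C →ₗ[R] C →ₗ[R] M where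
  toFun a := llcomp R C M' M (G a) ∘ₗ H
  map_add' a b := by ext; simp
  map_smul' c a := by ext; simp

@[simp] lemma tri_apply (G : C →ₗ[R] M' →ₗ[R] M) (H : C →ₗ[R] C →ₗ[R] M')
    (a b c : C) : tri G H a b c = G a (H b c) := rfl

/-- Trilinear map `a b c ↦ G (H a b) c`. -/
noncomputable def triL (G : M' →ₗ[R] C →ₗ[R] M) (H : C →ₗ[R] C →ₗ[R] M') :
    C →ₗ[R] C →ₗ[R] C →ₗ[R] M where
  toFun a := G ∘ₗ H a
  map_add' a b := by ext; simp
  map_smul' c a := by ext; simp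

@[simp] lemma triL_apply (G : M' →ₗ[R] C →ₗ[R] M) (H : C →ₗ[R] C →ₗ[R] M')
    (a b c : C) : triL G H a b c = G (H a b) c := rfl

section Conv

variable {A : Type*} [Semiring A] [Algebra R A]

/-- Convolution product of linear maps from a coalgebra to an algebra. -/
noncomputable def conv (f g : C →ₗ[R] A) : C →ₗ[R] A :=
  LinearMap.mul' R A ∘ₗ TensorProduct.map f g ∘ₗ Coalgebra.comul

/-- Convolution unit. -/
noncomputable def convUnit : C →ₗ[R] A :=
  Algebra.linearMap R A ∘ₗ Coalgebra.counit

lemma conv_apply_repr (f g : C →ₗ[R] A) {x : C} (r : Repr R x ι) :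
    conv f g x = ∑ i ∈ r.index, f (r.left i) * g (r.right i) := by
  simp only [conv, comp_apply]
  rw [← r.eq]
  simp [map_sum]

lemma convUnit_apply (x : C) :
    (convUnit (R := R) (C := C) (A := A)) x = algebraMap R A (counit (R := R) x) := rfl

lemma convUnit_conv (f : C →ₗ[R] A) : conv convUnit f = f := by
  ext x
  rw [conv_apply_repr _ _ (ℛ R x)]
  calc ∑ i ∈ (ℛ R x).index, convUnit ((ℛ R x).left i) * f ((ℛ R x).right i)
      = ∑ i ∈ (ℛ R x).index, counit (R := R) ((ℛ R x).left i) • f ((ℛ R x).right i) := by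
        simp [convUnit_apply, Algebra.smul_def]
    _ = f x := by
        simp_rw [← map_smul, ← map_sum]
        rw [sum_counit_smul]

lemma conv_convUnit (f : C →ₗ[R] A) : conv f convUnit = f := by
  ext x
  rw [conv_apply_repr _ _ (ℛ R x)]
  calc ∑ i ∈ (ℛ R x).index, f ((ℛ R x).left i) * convUnit ((ℛ R x).right i)
      = ∑ i ∈ (ℛ R x).index, counit (R := R) ((ℛ R x).right i) • f ((ℛ R x).left i) := by
        simp only [convUnit_apply, ← Algebra.commutes, Algebra.smul_def]
    _ = f x := by
        simp_rw [← map_smul, ← map_sum]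
        rw [sum_smul_counit]

lemma conv_assoc (f g h : C →ₗ[R] A) : conv (conv f g) h = conv f (conv g h) := by
  ext x
  set r := ℛ R x
  set rl : ∀ i, Repr R (r.left i) (C × C) := fun i => ℛ R (r.left i)
  set rr : ∀ i, Repr R (r.right i) (C × C) := fun i => ℛ R (r.right i)
  have key := triple_coassoc
    (triL ((LinearMap.mul R A).compl₂ h) ((LinearMap.mul R A ∘ₗ f).compl₂ g)) r rl rr
  simp only [triL_apply, compl₂_apply, LinearMap.mul_apply', comp_apply] at key
  calc conv (conv f g) h x
      = ∑ i ∈ r.index, conv f g (r.left i) * h (r.right i) := conv_apply_repr _ _ r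
    _ = ∑ i ∈ r.index, ∑ p ∈ (rl i).index,
          f ((rl i).left p) * g ((rl i).right p) * h (r.right i) := by
        refine Finset.sum_congr rfl fun i _ => ?_
        rw [conv_apply_repr _ _ (rl i), Finset.sum_mul]
    _ = ∑ i ∈ r.index, ∑ q ∈ (rr i).index,
          f (r.left i) * g ((rr i).left q) * h ((rr i).right q) := key
    _ = ∑ i ∈ r.index, f (r.left i) * conv g h (r.right i) := by
        refine Finset.sum_congr rfl fun i _ => ?_
        rw [conv_apply_repr _ _ (rr i), Finset.mul_sum]
        simp_rw [mul_assoc]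
    _ = conv f (conv g h) x := (conv_apply_repr _ _ r).symm

lemma conv_unique (f g h : C →ₗ[R] A) (h1 : conv g f = convUnit)
    (h2 : conv f h = convUnit) : g = h := by
  have := conv_assoc g f h
  rw [h1, h2, convUnit_conv, conv_convUnit] at this
  exact this.symm

end Conv

section Hopf

variable {U : Type*} [Semiring U] [HopfAlgebra R U]

open HopfAlgebra

/-- `τ ∘ (S ⊗ S) ∘ Δ`. -/
noncomputable def Gmap : U →ₗ[R] U ⊗[R] U :=
  (TensorProduct.comm R U U).toLinearMap ∘ₗ
    TensorProduct.map (antipode (R := R)) (antipode (R := R)) ∘ₗ Coalgebra.comul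

lemma Gmap_repr {x : U} (r : Repr R x ι) :
    Gmap (R := R) x
      = ∑ i ∈ r.index, antipode (R := R) (r.right i) ⊗ₜ[R] antipode (R := R) (r.left i) := by
  rw [Gmap]
  simp only [comp_apply]
  rw [← r.eq, map_sum, map_sum]
  simp

/-- `Σ Δ(c₁) * (S w ⊗ S c₂) = (c S(w)) ⊗ 1`. -/
lemma chi_comul (w c : U) :
    TensorProduct.lift
      (((LinearMap.mul R (U ⊗[R] U)) ∘ₗ Coalgebra.comul).compl₂
        ((TensorProduct.mk R U U (antipode (R := R) w)) ∘ₗ antipode (R := R)))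
      (Coalgebra.comul c)
      = (c * antipode (R := R) w) ⊗ₜ[R] (1 : U) := by
  set rc := ℛ R c with hrc
  set rcl : ∀ i, Repr R (rc.left i) (U × U) := fun i => ℛ R (rc.left i) with hrcl
  set rcr : ∀ i, Repr R (rc.right i) (U × U) := fun i => ℛ R (rc.right i) with hrcr
  have key := triple_coassoc
    (tri (TensorProduct.mk R U U ∘ₗ mulRight R (antipode (R := R) w))
      ((LinearMap.mul R U).compl₂ (antipode (R := R)))) rc rcl rcr
  simp only [tri_apply, compl₂_apply, LinearMap.mul_apply', comp_apply,
    TensorProduct.mk_apply, mulRight_apply] at key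
  rw [← rc.eq, map_sum]
  simp only [TensorProduct.lift.tmul, compl₂_apply, comp_apply, LinearMap.mul_apply',
    TensorProduct.mk_apply]
  calc ∑ i ∈ rc.index, Coalgebra.comul (R := R) (rc.left i) *
          (antipode (R := R) w ⊗ₜ[R] antipode (R := R) (rc.right i))
      = ∑ i ∈ rc.index, ∑ p ∈ (rcl i).index,
          ((rcl i).left p * antipode (R := R) w) ⊗ₜ[R]
            ((rcl i).right p * antipode (R := R) (rc.right i)) := by
        refine Finset.sum_congr rfl fun i _ => ?_
        rw [← (rcl i).eq, Finset.sum_mul]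
        simp [Algebra.TensorProduct.tmul_mul_tmul]
    _ = ∑ i ∈ rc.index, ∑ q ∈ (rcr i).index,
          (rc.left i * antipode (R := R) w) ⊗ₜ[R]
            ((rcr i).left q * antipode (R := R) ((rcr i).right q)) := key
    _ = ∑ i ∈ rc.index, counit (R := R) (rc.right i) •
          ((rc.left i * antipode (R := R) w) ⊗ₜ[R] (1 : U)) := by
        refine Finset.sum_congr rfl fun i _ => ?_
        rw [← TensorProduct.tmul_sum, sum_mul_antipode_eq_smul (rcr i),
          TensorProduct.tmul_smul]
    _ = (c * antipode (R := R) w) ⊗ₜ[R] (1 : U) := by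
        simp_rw [TensorProduct.smul_tmul', ← smul_mul_assoc]
        rw [← TensorProduct.sum_tmul, ← Finset.sum_mul, sum_smul_counit]

lemma conv_comulS :
    conv ((Coalgebra.comul (R := R)) ∘ₗ antipode (R := R) (A := U)) Coalgebra.comul
      = convUnit := by
  ext x
  set r := ℛ R x
  rw [conv_apply_repr _ _ r, convUnit_apply]
  calc ∑ i ∈ r.index, (Coalgebra.comul (R := R) ∘ₗ antipode (R := R)) (r.left i) *
        Coalgebra.comul (R := R) (r.right i)
      = Coalgebra.comul (R := R)
          (∑ i ∈ r.index, antipode (R := R) (r.left i) * r.right i) := by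
        rw [map_sum]
        exact Finset.sum_congr rfl fun i _ => (Bialgebra.comul_mul _ _).symm
    _ = algebraMap R (U ⊗[R] U) (counit (R := R) x) := by
        rw [sum_antipode_mul_eq_algebraMap_counit r, Bialgebra.comul_algebraMap]

lemma conv_comul_Gmap :
    conv (Coalgebra.comul (R := R) (A := U)) Gmap = convUnit := by
  ext x
  set r := ℛ R x with hr
  set rl : ∀ i, Repr R (r.left i) (U × U) := fun i => ℛ R (r.left i) with hrl
  set rr : ∀ i, Repr R (r.right i) (U × U) := fun i => ℛ R (r.right i) with hrr
  have key := triple_coassoc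
    (tri ((LinearMap.mul R (U ⊗[R] U)) ∘ₗ Coalgebra.comul)
      ((((TensorProduct.mk R U U) ∘ₗ antipode (R := R)).compl₂ (antipode (R := R))).flip))
    r rl rr
  simp only [tri_apply, compl₂_apply, flip_apply, LinearMap.mul_apply', comp_apply,
    TensorProduct.mk_apply] at key
  rw [conv_apply_repr _ _ r, convUnit_apply]
  calc ∑ i ∈ r.index, Coalgebra.comul (R := R) (r.left i) * Gmap (r.right i)
      = ∑ i ∈ r.index, ∑ q ∈ (rr i).index,
          Coalgebra.comul (R := R) (r.left i) *
            (antipode (R := R) ((rr i).right q) ⊗ₜ[R] antipode (R := R) ((rr i).left q)) := by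
        refine Finset.sum_congr rfl fun i _ => ?_
        rw [Gmap_repr (rr i), Finset.mul_sum]
    _ = ∑ i ∈ r.index, ∑ p ∈ (rl i).index,
          Coalgebra.comul (R := R) ((rl i).left p) *
            (antipode (R := R) (r.right i) ⊗ₜ[R] antipode (R := R) ((rl i).right p)) :=
        key.symm
    _ = ∑ i ∈ r.index, (r.left i * antipode (R := R) (r.right i)) ⊗ₜ[R] (1 : U) := by
        refine Finset.sum_congr rfl fun i _ => ?_
        have h := chi_comul (R := R) (r.right i) (r.left i)
        rw [← (rl i).eq, map_sum] at h
        simp only [TensorProduct.lift.tmul, compl₂_apply, comp_apply, LinearMap.mul_apply',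
          TensorProduct.mk_apply] at h
        exact h
    _ = algebraMap R (U ⊗[R] U) (counit (R := R) x) := by
        rw [← TensorProduct.sum_tmul, sum_mul_antipode_eq_algebraMap_counit r,
          Algebra.TensorProduct.algebraMap_apply]

set_option maxHeartbeats 1000000 in
lemma comul_antipode :
    (Coalgebra.comul (R := R)) ∘ₗ antipode (R := R) (A := U) = Gmap :=
  conv_unique (A := U ⊗[R] U) Coalgebra.comul _ _ conv_comulS conv_comul_Gmap

lemma comul_antipode_repr {x : U} (r : Repr R x ι) :
    Coalgebra.comul (R := R) (antipode (R := R) x)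
      = ∑ i ∈ r.index, antipode (R := R) (r.right i) ⊗ₜ[R] antipode (R := R) (r.left i) := by
  have h := LinearMap.congr_fun (comul_antipode (R := R) (U := U)) x
  rw [comp_apply] at h
  rw [h, Gmap_repr r]

end Hopf

section Grouplike

variable {U : Type*} [Semiring U] [HopfAlgebra R U]

open HopfAlgebra

variable {K Kinv : U}

lemma algebraMap_counit_K (hK1 : K * Kinv = 1)
    (hKg : Coalgebra.comul (R := R) K = K ⊗ₜ[R] K) :
    algebraMap R U (counit (R := R) K) = 1 := by
  have h := Coalgebra.rTensor_counit_comul (R := R) K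
  rw [hKg] at h
  have h2 := congrArg (TensorProduct.lid R U) h
  simp only [LinearMap.rTensor_tmul, TensorProduct.lid_tmul, one_smul] at h2
  calc algebraMap R U (counit (R := R) K)
      = counit (R := R) K • (1 : U) := Algebra.algebraMap_eq_smul_one _
    _ = counit (R := R) K • (K * Kinv) := by rw [hK1]
    _ = (counit (R := R) K • K) * Kinv := (smul_mul_assoc _ _ _).symm
    _ = 1 := by rw [h2, hK1]

lemma antipode_K (hK1 : K * Kinv = 1)
    (hKg : Coalgebra.comul (R := R) K = K ⊗ₜ[R] K) :
    antipode (R := R) K = Kinv := by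
  have h := mul_antipode_rTensor_comul_apply (R := R) (a := K)
  rw [hKg] at h
  simp only [LinearMap.rTensor_tmul, LinearMap.mul'_apply] at h
  rw [algebraMap_counit_K hK1 hKg] at h
  calc antipode (R := R) K = antipode (R := R) K * (K * Kinv) := by rw [hK1, mul_one]
    _ = (antipode (R := R) K * K) * Kinv := (mul_assoc _ _ _).symm
    _ = Kinv := by rw [h, one_mul]

lemma K_mul_antipode_K (hK1 : K * Kinv = 1)
    (hKg : Coalgebra.comul (R := R) K = K ⊗ₜ[R] K) :
    K * antipode (R := R) K = 1 := by
  have h := mul_antipode_lTensor_comul_apply (R := R) (a := K)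
  rw [hKg] at h
  simp only [LinearMap.lTensor_tmul, LinearMap.mul'_apply] at h
  rw [h, algebraMap_counit_K hK1 hKg]

/-- A representation of `comul (x * K)` from one of `comul x`, for grouplike `K`. -/
noncomputable def mulKRepr (hKg : Coalgebra.comul (R := R) K = K ⊗ₜ[R] K)
    {x : U} (r : Repr R x ι) : Repr R (x * K) ι where
  index := r.index
  left i := r.left i * K
  right i := r.right i * K
  eq := by
    rw [Bialgebra.comul_mul, hKg, ← r.eq, Finset.sum_mul]
    exact Finset.sum_congr rfl fun i _ => (Algebra.TensorProduct.tmul_mul_tmul _ _ _ _).symm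

@[simp] lemma mulKRepr_index (hKg : Coalgebra.comul (R := R) K = K ⊗ₜ[R] K)
    {x : U} (r : Repr R x ι) : (mulKRepr hKg r).index = r.index := rfl

@[simp] lemma mulKRepr_left (hKg : Coalgebra.comul (R := R) K = K ⊗ₜ[R] K)
    {x : U} (r : Repr R x ι) (i) : (mulKRepr hKg r).left i = r.left i * K := rfl

@[simp] lemma mulKRepr_right (hKg : Coalgebra.comul (R := R) K = K ⊗ₜ[R] K)
    {x : U} (r : Repr R x ι) (i) : (mulKRepr hKg r).right i = r.right i * K := rfl

lemma antipode_mul_K (hK1 : K * Kinv = 1)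
    (hKg : Coalgebra.comul (R := R) K = K ⊗ₜ[R] K) (x : U) :
    antipode (R := R) (x * K) = Kinv * antipode (R := R) x := by
  set r := ℛ R x with hr
  set rl : ∀ i, Repr R (r.left i) (U × U) := fun i => ℛ R (r.left i) with hrl
  set rr : ∀ i, Repr R (r.right i) (U × U) := fun i => ℛ R (r.right i) with hrr
  have key := triple_coassoc
    (tri ((LinearMap.mul R U) ∘ₗ (antipode (R := R) ∘ₗ mulRight R K))
      (((LinearMap.mul R U) ∘ₗ mulRight R K).compl₂
        (mulLeft R (antipode (R := R) K) ∘ₗ antipode (R := R)))) r rl rr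
  simp only [tri_apply, compl₂_apply, comp_apply, LinearMap.mul_apply',
    mulRight_apply, mulLeft_apply] at key
  have groupB : ∑ i ∈ r.index, ∑ q ∈ (rr i).index,
      antipode (R := R) (r.left i * K) * (((rr i).left q * K) *
        (antipode (R := R) K * antipode (R := R) ((rr i).right q)))
      = antipode (R := R) (x * K) := by
    have hsimp : ∀ b c : U, (b * K) * (antipode (R := R) K * antipode (R := R) c)
        = b * antipode (R := R) c := by
      intro b c
      rw [show (b * K) * (antipode (R := R) K * antipode (R := R) c)
          = b * ((K * antipode (R := R) K) * antipode (R := R) c) by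
            simp only [mul_assoc],
        K_mul_antipode_K hK1 hKg, one_mul]
    simp_rw [hsimp, ← Finset.mul_sum]
    calc ∑ i ∈ r.index, antipode (R := R) (r.left i * K) *
          (∑ q ∈ (rr i).index, (rr i).left q * antipode (R := R) ((rr i).right q))
        = ∑ i ∈ r.index, counit (R := R) (r.right i) • antipode (R := R) (r.left i * K) := by
          refine Finset.sum_congr rfl fun i _ => ?_
          rw [sum_mul_antipode_eq_smul (rr i), mul_smul_comm, mul_one]
      _ = antipode (R := R) (x * K) := by
          have : ∀ i, counit (R := R) (r.right i) • antipode (R := R) (r.left i * K)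
              = antipode (R := R) ((counit (R := R) (r.right i) • r.left i) * K) := by
            intro i
            rw [smul_mul_assoc, map_smul]
          simp_rw [this]
          rw [← map_sum, ← Finset.sum_mul, sum_smul_counit]
  have groupA : ∑ i ∈ r.index, ∑ p ∈ (rl i).index,
      antipode (R := R) ((rl i).left p * K) * (((rl i).right p * K) *
        (antipode (R := R) K * antipode (R := R) (r.right i)))
      = Kinv * antipode (R := R) x := by
    calc ∑ i ∈ r.index, ∑ p ∈ (rl i).index,
          antipode (R := R) ((rl i).left p * K) * (((rl i).right p * K) *
            (antipode (R := R) K * antipode (R := R) (r.right i)))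
        = ∑ i ∈ r.index, (∑ p ∈ (rl i).index,
            antipode (R := R) ((rl i).left p * K) * ((rl i).right p * K)) *
            (antipode (R := R) K * antipode (R := R) (r.right i)) := by
          refine Finset.sum_congr rfl fun i _ => ?_
          rw [Finset.sum_mul]
          exact Finset.sum_congr rfl fun p _ => (mul_assoc _ _ _).symm
      _ = ∑ i ∈ r.index, counit (R := R) (r.left i) •
            (antipode (R := R) K * antipode (R := R) (r.right i)) := by
          refine Finset.sum_congr rfl fun i _ => ?_
          have h := sum_antipode_mul_eq_algebraMap_counit (mulKRepr hKg (rl i))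
          rw [show (∑ p ∈ (rl i).index,
                antipode (R := R) ((rl i).left p * K) * ((rl i).right p * K))
              = algebraMap R U (counit (R := R) (r.left i * K)) from h,
            Bialgebra.counit_mul, map_mul,
            algebraMap_counit_K hK1 hKg, mul_one, ← Algebra.smul_def]
      _ = Kinv * antipode (R := R) x := by
          have : ∀ i, counit (R := R) (r.left i) •
              (antipode (R := R) K * antipode (R := R) (r.right i))
              = antipode (R := R) K * antipode (R := R) (counit (R := R) (r.left i) • r.right i) := by
            intro i
            rw [map_smul, mul_smul_comm]
          simp_rw [this]
          rw [← Finset.mul_sum, ← map_sum, sum_counit_smul, antipode_K hK1 hKg]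
  rw [← groupB, ← key]
  exact groupA

end Grouplike

end Coalg
end XiAux


open TensorProduct

/-- `B` is a right coideal subalgebra of the Hopf algebra `U`: `Δ(B) ⊆ B ⊗ U`. -/
def IsRightCoidealSubalgebra (k : Type*) {U : Type*} [CommSemiring k] [Semiring U]
    [Bialgebra k U] (B : Subalgebra k U) : Prop :=
  ∀ b ∈ B, Coalgebra.comul (R := k) b ∈
    LinearMap.range (LinearMap.rTensor U B.toSubmodule.subtype)

/-- The pairing `Ξ_{V,W}(Φ, Ψ)(x) = Σ tr_V( Φ(x₍₁₎) ∘ Ψ(S(x₍₂₎) · K) )`, where the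
trace is taken over the first module `V`. -/
noncomputable def XiPairing {k U : Type*} [Field k] [Ring U] [HopfAlgebra k U]
    {V W : Type*} [AddCommGroup V] [Module k V] [AddCommGroup W] [Module k W]
    (Φ : U →ₗ[k] (W →ₗ[k] V)) (Ψ : U →ₗ[k] (V →ₗ[k] W)) (K : U) : U →ₗ[k] k :=
  (LinearMap.trace k V) ∘ₗ
    (TensorProduct.lift (LinearMap.llcomp k V W V)) ∘ₗ
    (TensorProduct.map Φ
      (Ψ ∘ₗ (LinearMap.mulRight k K) ∘ₗ HopfAlgebra.antipode (R := k))) ∘ₗ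
    Coalgebra.comul (R := k)

/-- With `K` a grouplike invertible element implementing `S²`, for
matrix-spherical functions `Φ ∈ E^{V,W}` and `Ψ ∈ E^{W,V}`:
`Ξ_{V,W}(Φ, Ψ)(x) = Ξ_{W,V}(Ψ, Φ)(S(x)·K)` for all `x ∈ U`. -/
theorem XiPairing_symmetry
    (k U : Type*) [Field k] [Ring U] [HopfAlgebra k U]
    (K Kinv : U) (hK1 : K * Kinv = 1) (hK2 : Kinv * K = 1)
    (hKgrouplike : Coalgebra.comul (R := k) K = K ⊗ₜ[k] K)
    (hS2 : ∀ x : U,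
      HopfAlgebra.antipode (R := k) (HopfAlgebra.antipode (R := k) x) = K * x * Kinv)
    (B B' : Subalgebra k U)
    (hB : IsRightCoidealSubalgebra k B) (hB' : IsRightCoidealSubalgebra k B')
    (V W : Type*) [AddCommGroup V] [Module k V] [FiniteDimensional k V]
    [AddCommGroup W] [Module k W] [FiniteDimensional k W]
    (ρV : B →ₐ[k] Module.End k V) (ρW : B' →ₐ[k] Module.End k W)
    (Φ : U →ₗ[k] (W →ₗ[k] V))
    (hΦ : ∀ (b : B) (x : U) (b' : B'),
      Φ ((b : U) * x * (b' : U)) = (ρV b) ∘ₗ (Φ x) ∘ₗ (ρW b'))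
    (Ψ : U →ₗ[k] (V →ₗ[k] W))
    (hΨ : ∀ (b' : B') (x : U) (b : B),
      Ψ ((b' : U) * x * (b : U)) = (ρW b') ∘ₗ (Ψ x) ∘ₗ (ρV b)) :
    ∀ x : U,
      XiPairing Φ Ψ K x =
        XiPairing Ψ Φ K (HopfAlgebra.antipode (R := k) x * K) := by
  intro x
  set r := Coalgebra.Repr.arbitrary k x with hrdef
  have hSK2 : ∀ a : U, HopfAlgebra.antipode (R := k)
      (HopfAlgebra.antipode (R := k) a * K) * K = a := by
    intro a
    rw [XiAux.antipode_mul_K hK1 hKgrouplike, hS2,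
      show Kinv * (K * a * Kinv) * K = (Kinv * K) * a * (Kinv * K) by
        simp only [mul_assoc],
      hK2, one_mul, mul_one]
  have hcomul : Coalgebra.comul (R := k) (HopfAlgebra.antipode (R := k) x * K)
      = ∑ i ∈ r.index, (HopfAlgebra.antipode (R := k) (r.right i) * K) ⊗ₜ[k]
          (HopfAlgebra.antipode (R := k) (r.left i) * K) := by
    rw [Bialgebra.comul_mul, hKgrouplike, XiAux.comul_antipode_repr r, Finset.sum_mul]
    exact Finset.sum_congr rfl fun i _ => Algebra.TensorProduct.tmul_mul_tmul _ _ _ _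
  have hL : XiPairing Φ Ψ K x = ∑ i ∈ r.index,
      LinearMap.trace k V ((Φ (r.left i)) ∘ₗ
        (Ψ (HopfAlgebra.antipode (R := k) (r.right i) * K))) := by
    simp only [XiPairing, LinearMap.comp_apply]
    rw [← r.eq]
    simp only [map_sum]
    refine Finset.sum_congr rfl fun i _ => ?_
    simp [LinearMap.llcomp_apply', LinearMap.mulRight_apply]
  have hR : XiPairing Ψ Φ K (HopfAlgebra.antipode (R := k) x * K) = ∑ i ∈ r.index,
      LinearMap.trace k W ((Ψ (HopfAlgebra.antipode (R := k) (r.right i) * K)) ∘ₗ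
        (Φ (r.left i))) := by
    simp only [XiPairing, LinearMap.comp_apply]
    rw [hcomul]
    simp only [map_sum]
    refine Finset.sum_congr rfl fun i _ => ?_
    simp [LinearMap.llcomp_apply', LinearMap.mulRight_apply, hSK2]
  rw [hL, hR]
  exact Finset.sum_congr rfl fun i _ =>
    LinearMap.trace_comp_comm' (Ψ (HopfAlgebra.antipode (R := k) (r.right i) * K))
      (Φ (r.left i))
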